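/- arXiv:2203.09261 — 8 statements merged into one kernel-verified Lean document; each statement's English description precedes it below -/
import Mathlib

section
/- Let p be an odd prime, m ≥ 1, and suppose u = p^m + 2 is a prime with u ≥ 5. If u divides p^z − 1 for some integer z with 0 < z ≤ 4m, then either (p^m, u, z) = (3, 5, 4) or (p^m, u, z) = (9, 11, 5). -/
/-- Lemma `div` of the paper: if `p` is an odd prime, `m ≥ 1`, `u = p^m + 2` is a
prime with `u ≥ 5`, and `u ∣ p^z - 1` for some `0 < z ≤ 4m`, then
`(p^m, u, z) = (3, 5, 4)` or `(9, 11, 5)`. -/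
theorem stmt_0 (p m u z : ℕ) (hp : p.Prime) (hodd : Odd p) (hm : 1 ≤ m)
    (hu : u = p ^ m + 2) (hup : u.Prime) (hu5 : 5 ≤ u)
    (hz0 : 0 < z) (hz : z ≤ 4 * m) (hdvd : u ∣ p ^ z - 1) :
    (p ^ m = 3 ∧ u = 5 ∧ z = 4) ∨ (p ^ m = 9 ∧ u = 11 ∧ z = 5) := by
  have hp2 := hp.two_le
  have hp3 : 3 ≤ p := by
    rcases hodd with ⟨t, ht⟩; omega
  have hpm3 : 3 ≤ p ^ m := by
    calc 3 ≤ p := hp3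
    _ = p ^ 1 := (pow_one p).symm
    _ ≤ p ^ m := Nat.pow_le_pow_right (by omega) hm
  -- integer divisibility
  have hpz1 : 1 ≤ p ^ z := Nat.one_le_pow _ _ (by omega)
  have hZ : (u:ℤ) ∣ (p:ℤ)^z - 1 := by
    have := Int.natCast_dvd_natCast.mpr hdvd
    push_cast [hpz1] at this
    exact this
  have hmod : ((p:ℤ)^m) ≡ -2 [ZMOD (u:ℤ)] := by
    have : (-2 : ℤ) - (p:ℤ)^m = (u:ℤ) * (-1) := by push_cast [hu]; ring
    exact Int.modEq_iff_dvd.mpr ⟨-1, this⟩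
  have key : ∀ k r : ℕ, z = m * k + r → (u:ℤ) ∣ (-2)^k * (p:ℤ)^r - 1 := by
    intro k r hzr
    have e : (p:ℤ)^z = ((p:ℤ)^m)^k * (p:ℤ)^r := by rw [hzr, pow_add, pow_mul]
    have h1 : ((p:ℤ)^m)^k * (p:ℤ)^r ≡ (-2)^k * (p:ℤ)^r [ZMOD (u:ℤ)] :=
      (hmod.pow k).mul_right _
    have h2 := h1.dvd  -- u ∣ (-2)^k * p^r - (p^m)^k * p^r
    have h3 := dvd_add h2 hZ
    rw [e] at h3
    have : (-2:ℤ)^k * (p:ℤ)^r - ((p:ℤ)^m)^k * (p:ℤ)^r + (((p:ℤ)^m)^k * (p:ℤ)^r - 1)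
        = (-2)^k * (p:ℤ)^r - 1 := by ring
    rwa [this] at h3
  -- split the range of z
  have hcases : (z ≤ m) ∨ (∃ r, 1 ≤ r ∧ r ≤ m ∧ z = m * 1 + r)
      ∨ (∃ r, 1 ≤ r ∧ r ≤ m ∧ z = m * 2 + r)
      ∨ (∃ r, 1 ≤ r ∧ r ≤ m ∧ z = m * 3 + r) := by
    rcases Nat.lt_or_ge z (m+1) with h | h
    · exact Or.inl (by omega)
    rcases Nat.lt_or_ge z (2*m+1) with h2 | h2
    · exact Or.inr (Or.inl ⟨z - m, by omega, by omega, by omega⟩)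
    rcases Nat.lt_or_ge z (3*m+1) with h3 | h3
    · exact Or.inr (Or.inr (Or.inl ⟨z - 2*m, by omega, by omega, by omega⟩))
    · exact Or.inr (Or.inr (Or.inr ⟨z - 3*m, by omega, by omega, by omega⟩))
  rcases hcases with h | ⟨r, hr1, hrm, hzr⟩ | ⟨r, hr1, hrm, hzr⟩ | ⟨r, hr1, hrm, hzr⟩
  · -- z ≤ m : impossible since u > p^z - 1 > 0
    exfalso
    have h1 : p ^ z ≤ p ^ m := Nat.pow_le_pow_right (by omega) h
    have h2 : 0 < p ^ z - 1 := by
      have : 3 ≤ p ^ z := by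
        calc 3 ≤ p := hp3
        _ = p ^ 1 := (pow_one p).symm
        _ ≤ p ^ z := Nat.pow_le_pow_right (by omega) hz0
      omega
    have := Nat.le_of_dvd h2 hdvd
    omega
  all_goals have hpr : p ^ r ≤ p ^ m := Nat.pow_le_pow_right (by omega) hrm
  all_goals have hppr : p ∣ p ^ r := dvd_pow_self p (by omega)
  all_goals have hppm : p ∣ p ^ m := dvd_pow_self p (by omega)
  all_goals have hpr1 : 1 ≤ p ^ r := Nat.one_le_pow _ _ (by omega)
  · -- k = 1 : u ∣ 2 p^r + 1
    exfalso
    have h1 := key 1 r hzr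
    have h2 : (u:ℤ) ∣ ((2 * p ^ r + 1 : ℕ) : ℤ) := by
      push_cast
      have e : (2 * (p:ℤ) ^ r + 1) = -((-2)^1 * (p:ℤ)^r - 1) := by ring
      rw [e]; exact dvd_neg.mpr h1
    have hN := Int.natCast_dvd_natCast.mp h2
    obtain ⟨j, hj⟩ := hN
    have hjlt : 2 * p ^ r + 1 < 2 * u := by omega
    have hj0 : j = 1 := by
      rcases Nat.lt_or_ge j 2 with h | h
      · interval_cases j <;> omega
      · exfalso; nlinarith [hj]
    rw [hj0] at hj
    -- 2 p^r = p^m + 1, p divides both p^r and p^m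
    have : p ∣ 1 := by
      have h3 : p ∣ 2 * p ^ r := Dvd.dvd.mul_left hppr 2
      have h4 : 1 = 2 * p ^ r - p ^ m := by omega
      rw [h4]; exact Nat.dvd_sub h3 hppm
    have := Nat.le_of_dvd one_pos this
    omega
  · -- k = 2 : u ∣ 4 p^r - 1
    have h1 := key 2 r hzr
    have h2 : (u:ℤ) ∣ ((4 * p ^ r - 1 : ℕ) : ℤ) := by
      push_cast [show (1:ℕ) ≤ 4 * p ^ r by omega]
      have e : (4 * (p:ℤ) ^ r - 1) = ((-2)^2 * (p:ℤ)^r - 1) := by ring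
      rw [e]; exact h1
    obtain ⟨j, hj⟩ := Int.natCast_dvd_natCast.mp h2
    have hj' : 4 * p ^ r = u * j + 1 := by omega
    have hjlt : j < 4 := by nlinarith
    have hj0 : 0 < j := by nlinarith
    interval_cases j
    · -- 4 p^r = p^m + 3 → p ∣ 3 → p = 3, then 4·3^r = 3^m + 3
      have hdp3 : p ∣ 3 := by
        have h3 : p ∣ 4 * p ^ r := Dvd.dvd.mul_left hppr 4
        have h4 : (3:ℕ) = 4 * p ^ r - p ^ m := by omega
        rw [h4]; exact Nat.dvd_sub h3 hppm
      have hps : p = 3 := by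
        have := Nat.le_of_dvd (by norm_num) hdp3; omega
      subst hps
      -- 4 * 3^r = 3^m + 3
      have heq : 4 * 3 ^ r = 3 ^ m + 3 := by omega
      have hr1' : r = 1 := by
        by_contra hc
        have hr2 : 2 ≤ r := by omega
        have hm2 : 2 ≤ m := by omega
        have d1 : (9:ℕ) ∣ 4 * 3 ^ r := Dvd.dvd.mul_left (pow_dvd_pow 3 hr2) 4
        have d2 : (9:ℕ) ∣ 3 ^ m := pow_dvd_pow 3 hm2
        have d3 : (9:ℕ) ∣ 3 := by
          have h4 : (3:ℕ) = 4 * 3 ^ r - 3 ^ m := by omega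
          rw [h4]; exact Nat.dvd_sub d1 d2
        have := Nat.le_of_dvd (by norm_num) d3; omega
      subst hr1'
      have hm2 : 3 ^ m = 3 ^ 2 := by norm_num at heq ⊢; omega
      have hm2' : m = 2 := Nat.pow_right_injective (by norm_num) hm2
      subst hm2'
      right
      refine ⟨by norm_num, by omega, by omega⟩
    · omega
    · -- 4 p^r = 3 p^m + 7 → p = 7 → m = 1 → u = 9 not prime
      exfalso
      have hdp7 : p ∣ 7 := by
        have h3 : p ∣ 4 * p ^ r := Dvd.dvd.mul_left hppr 4
        have h4 : p ∣ 3 * p ^ m := Dvd.dvd.mul_left hppm 3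
        have h5 : (7:ℕ) = 4 * p ^ r - 3 * p ^ m := by omega
        rw [h5]; exact Nat.dvd_sub h3 h4
      have hps : p = 7 := ((Nat.prime_dvd_prime_iff_eq hp (by norm_num)).mp hdp7)
      subst hps
      have heq : 4 * 7 ^ r = 3 * 7 ^ m + 7 := by omega
      have hr1' : r = 1 := by
        by_contra hc
        have hr2 : 2 ≤ r := by omega
        have hm2 : 2 ≤ m := by omega
        have d1 : (49:ℕ) ∣ 4 * 7 ^ r := Dvd.dvd.mul_left (pow_dvd_pow 7 hr2) 4
        have d2 : (49:ℕ) ∣ 3 * 7 ^ m := Dvd.dvd.mul_left (pow_dvd_pow 7 hm2) 3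
        have d3 : (49:ℕ) ∣ 7 := by
          have h4 : (7:ℕ) = 4 * 7 ^ r - 3 * 7 ^ m := by omega
          rw [h4]; exact Nat.dvd_sub d1 d2
        have := Nat.le_of_dvd (by norm_num) d3; omega
      subst hr1'
      have hm1 : 7 ^ m = 7 ^ 1 := by norm_num at heq ⊢; omega
      have hm1' : m = 1 := Nat.pow_right_injective (by norm_num) hm1
      subst hm1'
      norm_num at hu
      subst hu
      norm_num at hup
  · -- k = 3 : u ∣ 8 p^r + 1
    have h1 := key 3 r hzr
    have h2 : (u:ℤ) ∣ ((8 * p ^ r + 1 : ℕ) : ℤ) := by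
      push_cast
      have e : (8 * (p:ℤ) ^ r + 1) = -((-2)^3 * (p:ℤ)^r - 1) := by ring
      rw [e]; exact dvd_neg.mpr h1
    obtain ⟨j, hj⟩ := Int.natCast_dvd_natCast.mp h2
    have hjlt : j < 8 := by nlinarith
    have hj0 : 0 < j := by nlinarith
    interval_cases j
    · -- 8 p^r = p^m + 1 → p ∣ 1
      exfalso
      have : p ∣ 1 := by
        have h3 : p ∣ 8 * p ^ r := Dvd.dvd.mul_left hppr 8
        have h4 : (1:ℕ) = 8 * p ^ r - p ^ m := by omega
        rw [h4]; exact Nat.dvd_sub h3 hppm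
      have := Nat.le_of_dvd one_pos this
      omega
    · omega
    · -- 8 p^r = 3 p^m + 5 → p = 5 → 8·5^r = 3·5^m+5 → r=1 → 3·5^m = 35 imposs
      exfalso
      have hdp5 : p ∣ 5 := by
        have h3 : p ∣ 8 * p ^ r := Dvd.dvd.mul_left hppr 8
        have h4 : p ∣ 3 * p ^ m := Dvd.dvd.mul_left hppm 3
        have h5 : (5:ℕ) = 8 * p ^ r - 3 * p ^ m := by omega
        rw [h5]; exact Nat.dvd_sub h3 h4
      have hps : p = 5 := ((Nat.prime_dvd_prime_iff_eq hp (by norm_num)).mp hdp5)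
      subst hps
      have heq : 8 * 5 ^ r = 3 * 5 ^ m + 5 := by omega
      have hr1' : r = 1 := by
        by_contra hc
        have hr2 : 2 ≤ r := by omega
        have hm2 : 2 ≤ m := by omega
        have d1 : (25:ℕ) ∣ 8 * 5 ^ r := Dvd.dvd.mul_left (pow_dvd_pow 5 hr2) 8
        have d2 : (25:ℕ) ∣ 3 * 5 ^ m := Dvd.dvd.mul_left (pow_dvd_pow 5 hm2) 3
        have d3 : (25:ℕ) ∣ 5 := by
          have h4 : (5:ℕ) = 8 * 5 ^ r - 3 * 5 ^ m := by omega
          rw [h4]; exact Nat.dvd_sub d1 d2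
        have := Nat.le_of_dvd (by norm_num) d3; omega
      subst hr1'
      norm_num at heq
      -- 40 = 3 * 5 ^ m + 5 → 3 * 5^m = 35, impossible
      have h5m : 5 ≤ 5 ^ m := by
        calc 5 = 5 ^ 1 := by norm_num
        _ ≤ 5 ^ m := Nat.pow_le_pow_right (by norm_num) hm
      -- 3 * 5^m = 35 has no solution: 5^m = 5 gives 15, 5^m ≥ 25 gives ≥ 75
      rcases Nat.lt_or_ge m 2 with h | h
      · have : m = 1 := by omega
        subst this; norm_num at heq
      · have : 25 ≤ 5 ^ m := by
          calc (25:ℕ) = 5 ^ 2 := by norm_num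
          _ ≤ 5 ^ m := Nat.pow_le_pow_right (by norm_num) h
        omega
    · omega
    · -- 8 p^r = 5 p^m + 9 → p ∣ 9 → p = 3
      have hdp9 : p ∣ 9 := by
        have h3 : p ∣ 8 * p ^ r := Dvd.dvd.mul_left hppr 8
        have h4 : p ∣ 5 * p ^ m := Dvd.dvd.mul_left hppm 5
        have h5 : (9:ℕ) = 8 * p ^ r - 5 * p ^ m := by omega
        rw [h5]; exact Nat.dvd_sub h3 h4
      have hps : p = 3 := by
        have h9 : (9:ℕ) = 3 ^ 2 := by norm_num
        have := hp.dvd_of_dvd_pow (h9 ▸ hdp9)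
        have := Nat.le_of_dvd (by norm_num) this
        omega
      subst hps
      have heq : 8 * 3 ^ r = 5 * 3 ^ m + 9 := by omega
      have hrle : r ≤ 2 := by
        by_contra hc
        have hr3 : 3 ≤ r := by omega
        have hm3 : 3 ≤ m := by omega
        have d1 : (27:ℕ) ∣ 8 * 3 ^ r := Dvd.dvd.mul_left (pow_dvd_pow 3 hr3) 8
        have d2 : (27:ℕ) ∣ 5 * 3 ^ m := Dvd.dvd.mul_left (pow_dvd_pow 3 hm3) 5
        have d3 : (27:ℕ) ∣ 9 := by
          have h4 : (9:ℕ) = 8 * 3 ^ r - 5 * 3 ^ m := by omega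
          rw [h4]; exact Nat.dvd_sub d1 d2
        have := Nat.le_of_dvd (by norm_num) d3; omega
      interval_cases r
      · -- 24 = 5 * 3^m + 9 → 3^m = 3 → m = 1
        norm_num at heq
        have h3m : 3 ^ m = 3 ^ 1 := by omega
        have hm1 : m = 1 := Nat.pow_right_injective (by norm_num) h3m
        subst hm1
        left
        refine ⟨by norm_num, by omega, by omega⟩
      · -- 72 = 5 * 3^m + 9 → 5 * 3^m = 63 impossible
        exfalso
        norm_num at heq
        have d : (3:ℕ) ∣ 5 * 3 ^ m := Dvd.dvd.mul_left (dvd_pow_self 3 (by omega)) 5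
        omega
    · omega
    · -- 8 p^r = 7 p^m + 13 → p = 13 → m = 1 → u = 15 not prime
      exfalso
      have hdp13 : p ∣ 13 := by
        have h3 : p ∣ 8 * p ^ r := Dvd.dvd.mul_left hppr 8
        have h4 : p ∣ 7 * p ^ m := Dvd.dvd.mul_left hppm 7
        have h5 : (13:ℕ) = 8 * p ^ r - 7 * p ^ m := by omega
        rw [h5]; exact Nat.dvd_sub h3 h4
      have hps : p = 13 := ((Nat.prime_dvd_prime_iff_eq hp (by norm_num)).mp hdp13)
      subst hps
      have heq : 8 * 13 ^ r = 7 * 13 ^ m + 13 := by omega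
      have hr1' : r = 1 := by
        by_contra hc
        have hr2 : 2 ≤ r := by omega
        have hm2 : 2 ≤ m := by omega
        have d1 : (169:ℕ) ∣ 8 * 13 ^ r := Dvd.dvd.mul_left (pow_dvd_pow 13 hr2) 8
        have d2 : (169:ℕ) ∣ 7 * 13 ^ m := Dvd.dvd.mul_left (pow_dvd_pow 13 hm2) 7
        have d3 : (169:ℕ) ∣ 13 := by
          have h4 : (13:ℕ) = 8 * 13 ^ r - 7 * 13 ^ m := by omega
          rw [h4]; exact Nat.dvd_sub d1 d2
        have := Nat.le_of_dvd (by norm_num) d3; omega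
      subst hr1'
      have hm1 : 13 ^ m = 13 ^ 1 := by norm_num at heq ⊢; omega
      have hm1' : m = 1 := Nat.pow_right_injective (by norm_num) hm1
      subst hm1'
      norm_num at hu
      subst hu
      norm_num at hup
end

section
/- The equation 2^(2n−1) ± 2^(n−1) = p^m + 2 with n ≥ 3, p an odd prime and m ≥ 1 has no solutions. -/
/-- The equation `2^(2n-1) ± 2^(n-1) = p^m + 2` with `n ≥ 3`, `p` an odd prime
and `m ≥ 1` has no solutions. -/
theorem stmt_3 (n p m : ℕ) (hn : 3 ≤ n) (hp : p.Prime) (hodd : Odd p)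
    (hm : 1 ≤ m) :
    2 ^ (2 * n - 1) + 2 ^ (n - 1) ≠ p ^ m + 2 ∧
      2 ^ (2 * n - 1) - 2 ^ (n - 1) ≠ p ^ m + 2 := by
  obtain ⟨k, hk⟩ := hodd.pow (n := m)
  have e1 : 2 ^ (2 * n - 1) = 2 * 2 ^ (2 * n - 2) := by
    have h : 2 * n - 1 = (2 * n - 2) + 1 := by omega
    rw [h, pow_succ]; ring
  have e2 : 2 ^ (n - 1) = 2 * 2 ^ (n - 2) := by
    have h : n - 1 = (n - 2) + 1 := by omega
    rw [h, pow_succ]; ring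
  omega
end

section
/- Let q be an odd prime power and n ≥ 3 an odd integer. If 2(q^(n−1) − 1) divides (q^2 − 1)(q − 1)(q − 6), then n = 3. -/
/-- Let `q` be an odd prime power and `n ≥ 3` odd. If `2(q^(n-1) - 1)` divides
`(q^2 - 1)(q - 1)(q - 6)`, then `n = 3`. -/
theorem stmt_5 (q n : ℕ) (hq : ∃ p k : ℕ, p.Prime ∧ 0 < k ∧ q = p ^ k)
    (hqodd : Odd q) (hn : 3 ≤ n) (hnodd : Odd n)
    (hdvd : (2 * ((q : ℤ) ^ (n - 1) - 1)) ∣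
      ((q : ℤ) ^ 2 - 1) * ((q : ℤ) - 1) * ((q : ℤ) - 6)) :
    n = 3 := by
  -- q ≥ 3
  obtain ⟨p, k, hp, hk, rfl⟩ := hq
  have hq2 : 2 ≤ p ^ k := Nat.one_lt_pow (by omega) hp.one_lt
  have hq3 : 3 ≤ p ^ k := by
    rcases hqodd with ⟨m, hm⟩
    omega
  set Q : ℤ := ((p ^ k : ℕ) : ℤ) with hQdef
  have hQ3 : (3 : ℤ) ≤ Q := by rw [hQdef]; exact_mod_cast hq3
  have hQodd : Odd Q := by rw [hQdef]; exact_mod_cast hqodd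
  have hQ6 : Q ≠ 6 := by
    intro h
    rw [h] at hQodd
    exact (Int.not_odd_iff_even.mpr (by decide)) hQodd
  by_contra hne
  have hn5 : 5 ≤ n := by
    rcases hnodd with ⟨m, hm⟩
    omega
  -- Q^(n-1) ≥ Q^4
  have hpow : Q ^ 4 ≤ Q ^ (n - 1) :=
    pow_le_pow_right₀ (by linarith) (by omega)
  -- RHS is nonzero
  have h1 : (0 : ℤ) < Q ^ 2 - 1 := by nlinarith
  have h2 : (0 : ℤ) < Q - 1 := by linarith
  have h3 : Q - 6 ≠ 0 := fun h => hQ6 (by linarith)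
  have hrne : (Q ^ 2 - 1) * (Q - 1) * (Q - 6) ≠ 0 := by
    apply mul_ne_zero (mul_ne_zero h1.ne' h2.ne') h3
  -- divisibility bound
  have hle : 2 * (Q ^ (n - 1) - 1) ≤ |(Q ^ 2 - 1) * (Q - 1) * (Q - 6)| :=
    Int.le_of_dvd (abs_pos.mpr hrne) ((dvd_abs _ _).mpr hdvd)
  have habs : |(Q ^ 2 - 1) * (Q - 1) * (Q - 6)| ≤ (Q ^ 2 - 1) * (Q - 1) * (Q + 6) := by
    rw [abs_mul, abs_of_pos (mul_pos h1 h2)]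
    have : |Q - 6| ≤ Q + 6 := by
      rw [abs_le]; constructor <;> linarith
    nlinarith [mul_pos h1 h2]
  have hbig : (Q ^ 2 - 1) * (Q - 1) * (Q + 6) < 2 * (Q ^ 4 - 1) := by
    nlinarith [mul_pos h1 (show (0:ℤ) < Q^2 - 5*Q + 8 by nlinarith [sq_nonneg (2*Q-5)])]
  have : 2 * (Q ^ 4 - 1) ≤ 2 * (Q ^ (n - 1) - 1) := by linarith
  linarith
end

section
/- Let m ≥ 1 and let u be a prime with u ∣ 2^(2(2m+1)) − 1 and u not dividing 2^(2m+1) − 1 (so u divides 2^(2m+1)+1). Then 2^(4m+2) − 1 does not divide 2^(6m+3) − 5. -/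
/-- Let `m ≥ 1` and `u` a prime with `u ∣ 2^(2(2m+1)) - 1` and
`u ∤ 2^(2m+1) - 1`. Then `2^(4m+2) - 1` does not divide `2^(6m+3) - 5`. -/
theorem stmt_8 (m u : ℕ) (hm : 1 ≤ m) (hu : u.Prime)
    (hdvd : u ∣ 2 ^ (2 * (2 * m + 1)) - 1)
    (hndvd : ¬ u ∣ 2 ^ (2 * m + 1) - 1) :
    ¬ (2 ^ (4 * m + 2) - 1 ∣ 2 ^ (6 * m + 3) - 5) := by
  intro h
  set a := 2 ^ (2 * m + 1) with ha
  have h8 : 8 ≤ a := by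
    have : 2 ^ 3 ≤ 2 ^ (2 * m + 1) := Nat.pow_le_pow_right (by norm_num) (by omega)
    simpa using this
  have ha2 : 2 ^ (4 * m + 2) = a * a := by
    rw [ha, ← pow_add]; ring_nf
  have ha3 : 2 ^ (6 * m + 3) = a * a * a := by
    rw [ha, ← pow_add, ← pow_add]; ring_nf
  rw [ha2, ha3] at h
  have hmul : a * a - 1 ∣ a * (a * a - 1) := Dvd.intro_left a rfl
  have hsub : a * a * a - 5 - a * (a * a - 1) = a - 5 := by
    have h1 : a * (a * a - 1) = a * a * a - a := by
      rw [Nat.mul_sub, Nat.mul_one, ← mul_assoc]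
    have h2 : a ≤ a * a * a := Nat.le_mul_of_pos_left _ (by positivity)
    omega
  have hd : a * a - 1 ∣ a - 5 := by
    have := Nat.dvd_sub h hmul
    rwa [hsub] at this
  have hle : a * a - 1 ≤ a - 5 := Nat.le_of_dvd (by omega) hd
  have h64 : 8 * a ≤ a * a := Nat.mul_le_mul_right a h8
  omega
end

section
/- Let D = (P, B) be a symmetric 2-(v,k,λ) design admitting a flag-transitive automorphism group G leaving invariant a nontrivial partition Σ of P. Fix for each block B and each class Δ with B ∩ Δ ≠ ∅ the number θ(Δ,B) of blocks B' with B' ∩ Δ = B ∩ Δ. Then θ(Δ,B) is a constant, independent of the choice of Δ ∈ Σ and of the block B meeting Δ. -/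
/-- Lemma 2.1 of the paper: in a nontrivial symmetric `2-(v,k,λ)` design with a
flag-transitive automorphism group `G` leaving invariant a nontrivial partition
`P` of the point set into classes of size `c`, the number of blocks having the
same intersection with a class as a given block meeting that class is a
constant, independent of the class and the block. -/
theorem stmt_11 {α : Type*} [Fintype α] [DecidableEq α]
    (v k lam c : ℕ) (𝓑 : Finset (Finset α)) (P : Finset (Finset α))
    (hv : Fintype.card α = v)
    (hk : ∀ B ∈ 𝓑, B.card = k)
    (hlam : ∀ x y : α, x ≠ y → (𝓑.filter (fun B => x ∈ B ∧ y ∈ B)).card = lam)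
    (hsym : 𝓑.card = v)
    (hk2 : 2 < k) (hkv : k < v)
    (G : Subgroup (Equiv.Perm α))
    (hGB : ∀ g ∈ G, ∀ B ∈ 𝓑, B.image g ∈ 𝓑)
    (hflag : ∀ (x : α) (B : Finset α), B ∈ 𝓑 → x ∈ B →
      ∀ (y : α) (C : Finset α), C ∈ 𝓑 → y ∈ C →
        ∃ g ∈ G, g x = y ∧ B.image g = C)
    (hpart : ∀ x : α, ∃! Δ, Δ ∈ P ∧ x ∈ Δ)
    (hGP : ∀ g ∈ G, ∀ Δ ∈ P, Δ.image g ∈ P)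
    (hc : ∀ Δ ∈ P, Δ.card = c) (hc1 : 1 < c) (hcv : c < v) :
    ∃ θ : ℕ, ∀ Δ ∈ P, ∀ B ∈ 𝓑, (B ∩ Δ).Nonempty →
      (𝓑.filter (fun B' => B' ∩ Δ = B ∩ Δ)).card = θ := by
  classical
  by_cases h : ∃ Δ ∈ P, ∃ B ∈ 𝓑, (B ∩ Δ).Nonempty
  · obtain ⟨Δ₀, hΔ₀, B₀, hB₀, hne₀⟩ := h
    refine ⟨(𝓑.filter (fun B' => B' ∩ Δ₀ = B₀ ∩ Δ₀)).card, ?_⟩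
    intro Δ hΔ B hB hne
    obtain ⟨x, hx⟩ := hne₀
    obtain ⟨y, hy⟩ := hne
    simp only [Finset.mem_inter] at hx hy
    obtain ⟨g, hgG, hgx, hgB⟩ := hflag x B₀ hB₀ hx.1 y B hB hy.1
    have hginj : Function.Injective (g : α → α) := g.injective
    have hΔimg : Δ₀.image g = Δ := by
      obtain ⟨Δ', ⟨hΔ'P, hyΔ'⟩, huniq⟩ := hpart y
      have h1 : Δ₀.image g = Δ' := huniq _ ⟨hGP g hgG Δ₀ hΔ₀, by
        rw [← hgx]; exact Finset.mem_image_of_mem _ hx.2⟩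
      have h2 : Δ = Δ' := huniq _ ⟨hΔ, hy.2⟩
      rw [h1, h2]
    symm
    apply Finset.card_bij (fun C _ => C.image g)
    · intro C hC
      simp only [Finset.mem_filter] at hC ⊢
      refine ⟨hGB g hgG C hC.1, ?_⟩
      rw [← hΔimg, ← hgB, ← Finset.image_inter _ _ hginj,
        ← Finset.image_inter _ _ hginj, hC.2]
    · intro C1 h1 C2 h2 heq
      exact Finset.image_injective hginj heq
    · intro C' hC'
      simp only [Finset.mem_filter] at hC'
      have hinv : Function.Injective ((g⁻¹ : Equiv.Perm α) : α → α) :=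
        (g⁻¹ : Equiv.Perm α).injective
      refine ⟨C'.image (g⁻¹ : Equiv.Perm α), ?_, ?_⟩
      · simp only [Finset.mem_filter]
        refine ⟨hGB _ (inv_mem hgG) C' hC'.1, ?_⟩
        have hΔ0 : Δ₀ = Δ.image (g⁻¹ : Equiv.Perm α) := by
          rw [← hΔimg, Finset.image_image]
          simp [Function.comp_def]
        have hB₀' : B₀ = B.image (g⁻¹ : Equiv.Perm α) := by
          rw [← hgB, Finset.image_image]
          simp [Function.comp_def]
        rw [hΔ0, hB₀', ← Finset.image_inter _ _ hinv,
          ← Finset.image_inter _ _ hinv, hC'.2]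
      · rw [Finset.image_image]
        simp [Function.comp_def]
  · push_neg at h
    exact ⟨0, fun Δ hΔ B hB hne => absurd hne (by simpa using h Δ hΔ B hB)⟩
end

section
/- With D, G, Σ as above, let θ be the common overlap number. For Δ ∈ Σ, B a block with B ∩ Δ ≠ ∅, and x ∈ B ∩ Δ, we have θ = [G_{x, B∩Δ} : G_{x,B}], the index of the stabilizer of the pair (x, B) in the stabilizer of the pair (x, B ∩ Δ). -/
open Pointwise

/-!
`G_{x,B∩Δ}` acts on the blocks, and its orbit of `B` is exactly the set of `θ` blocks `B'` with
`B' ∩ Δ = B ∩ Δ`: such a block passes through `x`, so flag-transitivity gives `g ∈ G_x` with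
`g B = B'`, and `g` fixes the class `Δ` of `x`, hence maps `B ∩ Δ` to `B' ∩ Δ = B ∩ Δ`.
The stabilizer of `B` in `G_{x,B∩Δ}` is `G_{x,B}`, so orbit–stabilizer gives the index.
-/

open MulAction

theorem Subgroup.inf_relIndex_inf_left {G : Type*} [Group G] (L M N : Subgroup G) :
    (L ⊓ N).relIndex (L ⊓ M) = N.relIndex (L ⊓ M) := by
  rw [← inf_relIndex_right (L ⊓ N), ← inf_relIndex_right N]
  congr 1
  rw [inf_assoc]
  exact inf_eq_right.mpr (inf_le_right.trans inf_le_left)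

theorem MulAction.relIndex_stabilizer {G X : Type*} [Group G] [MulAction G X]
    (K : Subgroup G) (b : X) : (stabilizer G b).relIndex K = (orbit K b).ncard := by
  rw [Subgroup.relIndex, ← index_stabilizer]
  rfl

section

variable {M α : Type*} [Group M] [MulAction M α] [DecidableEq α]

theorem inf_stabilizer_le_stabilizer_of_mem_partition {G : Subgroup M}
    {P : Finset (Finset α)} (hGP : ∀ g ∈ G, ∀ Δ ∈ P, g • Δ ∈ P) {x : α}
    (hpart : ∃! Δ, Δ ∈ P ∧ x ∈ Δ) {Δ : Finset α} (hΔ : Δ ∈ P) (hx : x ∈ Δ) :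
    G ⊓ stabilizer M x ≤ stabilizer M Δ := by
  rintro g ⟨hg, hgx⟩
  refine hpart.unique ⟨hGP g hg Δ hΔ, ?_⟩ ⟨hΔ, hx⟩
  rw [← mem_stabilizer_iff.mp hgx]
  exact Finset.smul_mem_smul_finset hx

theorem orbit_inf_stabilizer_inter_eq_filter {L : Subgroup M} {𝓑 : Finset (Finset α)}
    {B Δ : Finset α}
    (hL𝓑 : ∀ g ∈ L, ∀ C ∈ 𝓑, g • C ∈ 𝓑) (hLΔ : L ≤ stabilizer M Δ)
    (htrans : ∀ C ∈ 𝓑, C ∩ Δ = B ∩ Δ → ∃ g ∈ L, g • B = C) (hB : B ∈ 𝓑) :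
    orbit (L ⊓ stabilizer M (B ∩ Δ) : Subgroup M) B =
      ↑(𝓑.filter (fun C => C ∩ Δ = B ∩ Δ)) := by
  ext C
  simp only [Finset.coe_filter, Set.mem_ofPred_eq, mem_orbit_iff]
  constructor
  · rintro ⟨⟨g, hgL, hgBΔ⟩, rfl⟩
    refine ⟨hL𝓑 g hgL B hB, ?_⟩
    change g • B ∩ Δ = B ∩ Δ
    nth_rw 1 [← mem_stabilizer_iff.mp (hLΔ hgL)]
    rw [← Finset.smul_finset_inter]
    exact mem_stabilizer_iff.mp hgBΔ
  · rintro ⟨hC, hCΔ⟩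
    obtain ⟨g, hgL, rfl⟩ := htrans C hC hCΔ
    have hgBΔ : g • (B ∩ Δ) = B ∩ Δ := by
      rw [Finset.smul_finset_inter, mem_stabilizer_iff.mp (hLΔ hgL), hCΔ]
    exact ⟨⟨g, hgL, hgBΔ⟩, rfl⟩

end

theorem stmt_12_general {α : Type*} [DecidableEq α]
    (θ : ℕ) (𝓑 : Finset (Finset α)) (P : Finset (Finset α))
    (G : Subgroup (Equiv.Perm α))
    (hGB : ∀ g ∈ G, ∀ B ∈ 𝓑, B.image g ∈ 𝓑)
    (hflag : ∀ (x : α) (B : Finset α), B ∈ 𝓑 → x ∈ B →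
      ∀ (y : α) (C : Finset α), C ∈ 𝓑 → y ∈ C →
        ∃ g ∈ G, g x = y ∧ B.image g = C)
    (hpart : ∀ x : α, ∃! Δ, Δ ∈ P ∧ x ∈ Δ)
    (hGP : ∀ g ∈ G, ∀ Δ ∈ P, Δ.image g ∈ P)
    (hθ : ∀ Δ ∈ P, ∀ B ∈ 𝓑, (B ∩ Δ).Nonempty →
      (𝓑.filter (fun B' => B' ∩ Δ = B ∩ Δ)).card = θ)
    (Δ : Finset α) (hΔ : Δ ∈ P) (B : Finset α) (hB : B ∈ 𝓑)
    (x : α) (hx : x ∈ B ∩ Δ) :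
    θ = Subgroup.relIndex
      (G ⊓ MulAction.stabilizer (Equiv.Perm α) x ⊓
        MulAction.stabilizer (Equiv.Perm α) B)
      (G ⊓ MulAction.stabilizer (Equiv.Perm α) x ⊓
        MulAction.stabilizer (Equiv.Perm α) (B ∩ Δ)) := by
  obtain ⟨hxB, hxΔ⟩ := Finset.mem_inter.mp hx
  set Gx := G ⊓ stabilizer (Equiv.Perm α) x
  have hGxΔ : Gx ≤ stabilizer _ Δ :=
    inf_stabilizer_le_stabilizer_of_mem_partition hGP (hpart x) hΔ hxΔ
  have htrans : ∀ C ∈ 𝓑, C ∩ Δ = B ∩ Δ → ∃ g ∈ Gx, g • B = C := by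
    intro C hC hCΔ
    obtain ⟨g, hg, hgx, hgB⟩ := hflag x B hB hxB x C hC (Finset.mem_inter.mp (hCΔ ▸ hx)).1
    exact ⟨g, ⟨hg, hgx⟩, hgB⟩
  calc θ = (𝓑.filter (fun B' => B' ∩ Δ = B ∩ Δ)).card :=
        (hθ Δ hΔ B hB ⟨x, hx⟩).symm
    _ = (orbit (Gx ⊓ stabilizer _ (B ∩ Δ) : Subgroup _) B).ncard := by
      rw [orbit_inf_stabilizer_inter_eq_filter (fun g hg => hGB g (Subgroup.mem_inf.mp hg).1)
          hGxΔ htrans hB,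
        Set.ncard_coe_finset]
    _ = _ := by rw [Subgroup.inf_relIndex_inf_left, relIndex_stabilizer]

/-- Corollary 2.2 of the paper: with `D`, `G`, `P` as in Lemma 2.1 and `θ` the
common overlap number, for a class `Δ`, a block `B` meeting `Δ` and a point
`x ∈ B ∩ Δ`, we have `θ = [G_{x,B∩Δ} : G_{x,B}]`. -/
theorem stmt_12 {α : Type*} [Fintype α] [DecidableEq α]
    (v k lam c θ : ℕ) (𝓑 : Finset (Finset α)) (P : Finset (Finset α))
    (hv : Fintype.card α = v)
    (hk : ∀ B ∈ 𝓑, B.card = k)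
    (hlam : ∀ x y : α, x ≠ y → (𝓑.filter (fun B => x ∈ B ∧ y ∈ B)).card = lam)
    (hsym : 𝓑.card = v)
    (hk2 : 2 < k) (hkv : k < v)
    (G : Subgroup (Equiv.Perm α))
    (hGB : ∀ g ∈ G, ∀ B ∈ 𝓑, B.image g ∈ 𝓑)
    (hflag : ∀ (x : α) (B : Finset α), B ∈ 𝓑 → x ∈ B →
      ∀ (y : α) (C : Finset α), C ∈ 𝓑 → y ∈ C →
        ∃ g ∈ G, g x = y ∧ B.image g = C)
    (hpart : ∀ x : α, ∃! Δ, Δ ∈ P ∧ x ∈ Δ)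
    (hGP : ∀ g ∈ G, ∀ Δ ∈ P, Δ.image g ∈ P)
    (hc : ∀ Δ ∈ P, Δ.card = c) (hc1 : 1 < c) (hcv : c < v)
    (hθ : ∀ Δ ∈ P, ∀ B ∈ 𝓑, (B ∩ Δ).Nonempty →
      (𝓑.filter (fun B' => B' ∩ Δ = B ∩ Δ)).card = θ)
    (Δ : Finset α) (hΔ : Δ ∈ P) (B : Finset α) (hB : B ∈ 𝓑)
    (x : α) (hx : x ∈ B ∩ Δ) :
    θ = Subgroup.relIndex
      (G ⊓ MulAction.stabilizer (Equiv.Perm α) x ⊓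
        MulAction.stabilizer (Equiv.Perm α) B)
      (G ⊓ MulAction.stabilizer (Equiv.Perm α) x ⊓
        MulAction.stabilizer (Equiv.Perm α) (B ∩ Δ)) :=
  stmt_12_general θ 𝓑 P G hGB hflag hpart hGP hθ Δ hΔ B hB x hx
end

section
/- With D, G, Σ, θ as above and k₀ = |B ∩ Δ| ≥ 3 for some (hence every) block B meeting some class Δ, the incidence structure D_Δ = (Δ, {B ∩ Δ : B a block with B ∩ Δ ≠ ∅}) is a nontrivial 2-(c, k₀, λ/θ) design, θ divides λ, and the induced group G_Δ^Δ acts flag-transitively on D_Δ. -/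
/-- Theorem 2.3 of the paper: with `D`, `G`, `P`, `θ` as before and
`|B ∩ Δ| ∈ {0, k₀}` with `k₀ ≥ 3`, the structure
`D_Δ = (Δ, {B ∩ Δ : B ∈ 𝓑, B ∩ Δ ≠ ∅})` is a nontrivial
`2-(c, k₀, λ/θ)` design, `θ ∣ λ`, and the induced group `G_Δ^Δ` acts
flag-transitively on it. -/
theorem stmt_13 {α : Type*} [Fintype α] [DecidableEq α]
    (v k lam c k₀ θ : ℕ) (𝓑 : Finset (Finset α)) (P : Finset (Finset α))
    (hv : Fintype.card α = v)
    (hk : ∀ B ∈ 𝓑, B.card = k)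
    (hlam : ∀ x y : α, x ≠ y → (𝓑.filter (fun B => x ∈ B ∧ y ∈ B)).card = lam)
    (hsym : 𝓑.card = v)
    (hk2 : 2 < k) (hkv : k < v)
    (G : Subgroup (Equiv.Perm α))
    (hGB : ∀ g ∈ G, ∀ B ∈ 𝓑, B.image g ∈ 𝓑)
    (hflag : ∀ (x : α) (B : Finset α), B ∈ 𝓑 → x ∈ B →
      ∀ (y : α) (C : Finset α), C ∈ 𝓑 → y ∈ C →
        ∃ g ∈ G, g x = y ∧ B.image g = C)
    (hpart : ∀ x : α, ∃! Δ, Δ ∈ P ∧ x ∈ Δ)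
    (hGP : ∀ g ∈ G, ∀ Δ ∈ P, Δ.image g ∈ P)
    (hc : ∀ Δ ∈ P, Δ.card = c) (hc1 : 1 < c) (hcv : c < v)
    (hk₀3 : 3 ≤ k₀)
    (hk₀ : ∀ Δ ∈ P, ∀ B ∈ 𝓑, (B ∩ Δ).card = 0 ∨ (B ∩ Δ).card = k₀)
    (hθ : ∀ Δ ∈ P, ∀ B ∈ 𝓑, (B ∩ Δ).Nonempty →
      (𝓑.filter (fun B' => B' ∩ Δ = B ∩ Δ)).card = θ)
    (Δ : Finset α) (hΔ : Δ ∈ P) :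
    θ ∣ lam ∧
    -- every block of `D_Δ` has `k₀` points
    (∀ b ∈ (𝓑.filter (fun B => (B ∩ Δ).Nonempty)).image (fun B => B ∩ Δ),
        b.card = k₀) ∧
    -- every pair of distinct points of `Δ` lies on exactly `λ/θ` blocks of `D_Δ`
    (∀ x ∈ Δ, ∀ y ∈ Δ, x ≠ y →
      (((𝓑.filter (fun B => (B ∩ Δ).Nonempty)).image (fun B => B ∩ Δ)).filter
        (fun b => x ∈ b ∧ y ∈ b)).card = lam / θ) ∧
    -- `D_Δ` is nontrivial
    2 < k₀ ∧ k₀ < c ∧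
    -- `G_Δ^Δ` is flag-transitive on `D_Δ`
    (∀ x (b : Finset α),
      b ∈ (𝓑.filter (fun B => (B ∩ Δ).Nonempty)).image (fun B => B ∩ Δ) →
      x ∈ b →
      ∀ y (b' : Finset α),
        b' ∈ (𝓑.filter (fun B => (B ∩ Δ).Nonempty)).image (fun B => B ∩ Δ) →
        y ∈ b' →
        ∃ g ∈ G, Δ.image g = Δ ∧ g x = y ∧ b.image g = b') := by

  classical
  -- basic facts
  have hv2 : 2 < v := by omega
  have hBne : 𝓑.Nonempty := by
    rw [← Finset.card_pos, hsym]; omega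
  have hlam1 : 1 ≤ lam := by
    obtain ⟨B₀, hB₀⟩ := hBne
    have h3 : 1 < B₀.card := by rw [hk B₀ hB₀]; omega
    obtain ⟨x₀, hx₀, y₀, hy₀, hxy₀⟩ := Finset.one_lt_card.mp h3
    rw [← hlam x₀ y₀ hxy₀]
    exact Finset.card_pos.mpr ⟨B₀, Finset.mem_filter.mpr ⟨hB₀, hx₀, hy₀⟩⟩
  have hpoint : ∀ x : α, ∃ B ∈ 𝓑, x ∈ B := by
    intro x
    have h1 : 1 < Fintype.card α := by omega
    obtain ⟨y, hy⟩ := Fintype.exists_ne_of_one_lt_card h1 x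
    have := hlam x y (Ne.symm hy)
    have hne : (𝓑.filter (fun B => x ∈ B ∧ y ∈ B)).Nonempty := by
      rw [← Finset.card_pos, this]; omega
    obtain ⟨B, hB⟩ := hne
    rw [Finset.mem_filter] at hB
    exact ⟨B, hB.1, hB.2.1⟩
  have hΔcard : Δ.card = c := hc Δ hΔ
  have hΔ2 : 1 < Δ.card := by rw [hΔcard]; exact hc1
  obtain ⟨x₁, hx₁, y₁, hy₁, hxy₁⟩ := Finset.one_lt_card.mp hΔ2
  -- k₀ ≤ c
  have hk₀c : k₀ ≤ c := by
    obtain ⟨B, hB, hxB⟩ := hpoint x₁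
    have hne : (B ∩ Δ).Nonempty := ⟨x₁, Finset.mem_inter.mpr ⟨hxB, hx₁⟩⟩
    have := hk₀ Δ hΔ B hB
    have hcard : (B ∩ Δ).card = k₀ := by
      rcases this with h | h
      · exact absurd (Finset.card_eq_zero.mp h) (Finset.nonempty_iff_ne_empty.mp hne)
      · exact h
    calc k₀ = (B ∩ Δ).card := hcard.symm
      _ ≤ Δ.card := Finset.card_le_card Finset.inter_subset_right
      _ = c := hΔcard
  -- k₀ < c
  have hk₀c' : k₀ < c := by
    rcases lt_or_eq_of_le hk₀c with h | h
    · exact h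
    exfalso
    -- every block through a point of Δ contains Δ
    have hcontain : ∀ B ∈ 𝓑, ∀ z ∈ Δ, z ∈ B → Δ ⊆ B := by
      intro B hB z hzΔ hzB
      have hne : (B ∩ Δ).Nonempty := ⟨z, Finset.mem_inter.mpr ⟨hzB, hzΔ⟩⟩
      have hcard : (B ∩ Δ).card = k₀ := by
        rcases hk₀ Δ hΔ B hB with h' | h'
        · exact absurd (Finset.card_eq_zero.mp h') (Finset.nonempty_iff_ne_empty.mp hne)
        · exact h'
      have : B ∩ Δ = Δ := Finset.eq_of_subset_of_card_le Finset.inter_subset_right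
        (by rw [hcard, h, hΔcard])
      intro w hw
      have hw' : w ∈ B ∩ Δ := by rw [this]; exact hw
      exact (Finset.mem_inter.mp hw').1
    set S := 𝓑.filter (fun B => x₁ ∈ B) with hS
    have hSsub : ∀ z : α, z ≠ x₁ → S = 𝓑.filter (fun B => x₁ ∈ B ∧ z ∈ B) := by
      intro z hz
      have hTS : 𝓑.filter (fun B => x₁ ∈ B ∧ z ∈ B) ⊆ S := by
        intro B hB
        rw [Finset.mem_filter] at hB ⊢
        exact ⟨hB.1, hB.2.1⟩
      have hSy : S ⊆ 𝓑.filter (fun B => x₁ ∈ B ∧ y₁ ∈ B) := by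
        intro B hB
        rw [Finset.mem_filter] at hB ⊢
        exact ⟨hB.1, hB.2, hcontain B hB.1 x₁ hx₁ hB.2 hy₁⟩
      have hcardS : S.card ≤ lam := by
        calc S.card ≤ (𝓑.filter (fun B => x₁ ∈ B ∧ y₁ ∈ B)).card :=
              Finset.card_le_card hSy
          _ = lam := hlam x₁ y₁ hxy₁
      have : (𝓑.filter (fun B => x₁ ∈ B ∧ z ∈ B)).card = lam :=
        hlam x₁ z (Ne.symm hz)
      exact (Finset.eq_of_subset_of_card_le hTS (by omega)).symm
    have hSne : S.Nonempty := by
      obtain ⟨B, hB, hxB⟩ := hpoint x₁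
      exact ⟨B, Finset.mem_filter.mpr ⟨hB, hxB⟩⟩
    obtain ⟨B, hB⟩ := hSne
    have hBmem := (Finset.mem_filter.mp hB).1
    have hBuniv : ∀ z : α, z ∈ B := by
      intro z
      by_cases hz : z = x₁
      · rw [hz]; exact (Finset.mem_filter.mp hB).2
      · have := hSsub z hz
        rw [this] at hB
        exact (Finset.mem_filter.mp hB).2.2
    have : B = Finset.univ := Finset.eq_univ_iff_forall.mpr hBuniv
    have : B.card = v := by rw [this, Finset.card_univ, hv]
    rw [hk B hBmem] at this
    omega
  -- the pair count core lemma
  have hpair : ∀ x ∈ Δ, ∀ y ∈ Δ, x ≠ y →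
      (((𝓑.filter (fun B => (B ∩ Δ).Nonempty)).image (fun B => B ∩ Δ)).filter
        (fun b => x ∈ b ∧ y ∈ b)).card * θ = lam ∧
      θ ∣ lam := by
    intro x hx y hy hxy
    set L := 𝓑.filter (fun B => x ∈ B ∧ y ∈ B) with hL
    set f : Finset α → Finset α := fun B => B ∩ Δ with hf
    have hLsub : ∀ B ∈ L, x ∈ f B ∧ y ∈ f B := by
      intro B hB
      rw [Finset.mem_filter] at hB
      exact ⟨Finset.mem_inter.mpr ⟨hB.2.1, hx⟩, Finset.mem_inter.mpr ⟨hB.2.2, hy⟩⟩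
    -- the filtered image equals L.image f
    have himg : ((𝓑.filter (fun B => (B ∩ Δ).Nonempty)).image f).filter
        (fun b => x ∈ b ∧ y ∈ b) = L.image f := by
      ext b
      simp only [Finset.mem_filter, Finset.mem_image]
      constructor
      · rintro ⟨⟨B, hB, rfl⟩, hxb, hyb⟩
        exact ⟨B, Finset.mem_filter.mpr ⟨hB.1, (Finset.mem_inter.mp hxb).1,
          (Finset.mem_inter.mp hyb).1⟩, rfl⟩
      · rintro ⟨B, hB, rfl⟩
        have hBmem := (Finset.mem_filter.mp hB).1
        exact ⟨⟨B, ⟨hBmem, ⟨x, (hLsub B hB).1⟩⟩, rfl⟩,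
          (hLsub B hB).1, (hLsub B hB).2⟩
    -- fibers have size θ
    have hfiber : ∀ B ∈ L, (L.filter (fun B' => f B' = f B)).card = θ := by
      intro B hB
      have hBmem := (Finset.mem_filter.mp hB).1
      have hne : (B ∩ Δ).Nonempty := ⟨x, (hLsub B hB).1⟩
      have hθB := hθ Δ hΔ B hBmem hne
      have : L.filter (fun B' => f B' = f B) = 𝓑.filter (fun B' => B' ∩ Δ = B ∩ Δ) := by
        ext B'
        simp only [Finset.mem_filter, hL, hf]
        constructor
        · rintro ⟨⟨h1, _, _⟩, h4⟩; exact ⟨h1, h4⟩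
        · rintro ⟨h1, h4⟩
          refine ⟨⟨h1, ?_, ?_⟩, h4⟩
          · have : x ∈ B' ∩ Δ := h4 ▸ (hLsub B hB).1
            exact (Finset.mem_inter.mp this).1
          · have : y ∈ B' ∩ Δ := h4 ▸ (hLsub B hB).2
            exact (Finset.mem_inter.mp this).1
      rw [this, hθB]
    have hsum : L.card = (L.image f).card * θ := by
      rw [Finset.card_eq_sum_card_image f L]
      rw [Finset.sum_congr rfl (fun b hb => ?_), Finset.sum_const, smul_eq_mul]
      obtain ⟨B, hB, rfl⟩ := Finset.mem_image.mp hb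
      exact hfiber B hB
    have hLcard : L.card = lam := hlam x y hxy
    rw [himg, ← hLcard, hsum]
    exact ⟨rfl, dvd_mul_left θ _⟩
  have hθdvd : θ ∣ lam := (hpair x₁ hx₁ y₁ hy₁ hxy₁).2
  have hθpos : 0 < θ := by
    rcases Nat.eq_zero_or_pos θ with h | h
    · exfalso; rw [h] at hθdvd; omega
    · exact h
  refine ⟨hθdvd, ?_, ?_, by omega, hk₀c', ?_⟩
  · -- block sizes
    intro b hb
    obtain ⟨B, hB, rfl⟩ := Finset.mem_image.mp hb
    have hmem := Finset.mem_filter.mp hB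
    rcases hk₀ Δ hΔ B hmem.1 with h | h
    · exact absurd (Finset.card_eq_zero.mp h) (Finset.nonempty_iff_ne_empty.mp hmem.2)
    · exact h
  · -- pair counts
    intro x hx y hy hxy
    have h := (hpair x hx y hy hxy).1
    rw [← h, Nat.mul_div_cancel _ hθpos]
  · -- flag-transitivity
    intro x b hb hxb y b' hb' hyb'
    obtain ⟨B, hB, rfl⟩ := Finset.mem_image.mp hb
    obtain ⟨B', hB', rfl⟩ := Finset.mem_image.mp hb'
    have hBmem := (Finset.mem_filter.mp hB).1
    have hB'mem := (Finset.mem_filter.mp hB').1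
    have hxB : x ∈ B := (Finset.mem_inter.mp hxb).1
    have hxΔ : x ∈ Δ := (Finset.mem_inter.mp hxb).2
    have hyB' : y ∈ B' := (Finset.mem_inter.mp hyb').1
    have hyΔ : y ∈ Δ := (Finset.mem_inter.mp hyb').2
    obtain ⟨g, hg, hgx, hgB⟩ := hflag x B hBmem hxB y B' hB'mem hyB'
    have hgΔP : Δ.image g ∈ P := hGP g hg Δ hΔ
    have hyimg : y ∈ Δ.image g := Finset.mem_image.mpr ⟨x, hxΔ, hgx⟩
    obtain ⟨Δ₁, hΔ₁, huniq⟩ := hpart y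
    have h1 : Δ.image g = Δ₁ := huniq _ ⟨hgΔP, hyimg⟩
    have h2 : Δ = Δ₁ := huniq _ ⟨hΔ, hyΔ⟩
    have hgΔ : Δ.image g = Δ := h1.trans h2.symm
    refine ⟨g, hg, hgΔ, hgx, ?_⟩
    rw [Finset.image_inter B Δ (g : Equiv.Perm α).injective, hgB, hgΔ]
end

section
/- Let q be an odd prime power, n ≥ 3 odd, and μ an odd positive integer. Suppose [n choose 2]_q · μ = (q^n − 1)/2 · λ where [n choose 2]_q = (q^n−1)(q^(n−1)−1)/((q^2−1)(q−1)) is the Gaussian binomial coefficient, and λ ∣ q^n − 6. Then n = 3 and λ = 2μ/(q−1). -/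
set_option maxHeartbeats 1000000 in
/-- Let `q` be an odd prime power, `n ≥ 3` odd, `μ` odd positive, and suppose
`[n choose 2]_q · μ = (q^n - 1)/2 · λ` with `λ ∣ q^n - 6`. Then `n = 3` and
`λ = 2μ/(q-1)`. -/
theorem stmt_16 (q n lam mu : ℕ) (hq : ∃ p k : ℕ, p.Prime ∧ 0 < k ∧ q = p ^ k)
    (hqodd : Odd q) (hn : 3 ≤ n) (hnodd : Odd n)
    (hmu : 0 < mu) (hmuodd : Odd mu) (hlam : 0 < lam)
    (heq : (q ^ n - 1) * (q ^ (n - 1) - 1) / ((q ^ 2 - 1) * (q - 1)) * mu =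
      (q ^ n - 1) / 2 * lam)
    (hdvd : lam ∣ q ^ n - 6) :
    n = 3 ∧ lam = 2 * mu / (q - 1) := by
  obtain ⟨p, k, hp, hk, hqpk⟩ := hq
  have hq3 : 3 ≤ q := by
    have h2 : 1 < q := by
      rw [hqpk]; exact Nat.one_lt_pow (by omega) hp.one_lt
    obtain ⟨c, hc⟩ := hqodd
    omega
  obtain ⟨m, hm⟩ := hnodd
  have hm1 : 1 ≤ m := by omega
  -- exact divisibilities
  obtain ⟨S, hS⟩ : (q - 1) ∣ (q ^ n - 1) := by
    simpa using Nat.sub_dvd_pow_sub_pow q 1 n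
  obtain ⟨N, hN⟩ : (q ^ 2 - 1) ∣ (q ^ (n - 1) - 1) := by
    have h := Nat.sub_dvd_pow_sub_pow (q ^ 2) 1 m
    simpa [← pow_mul, show 2 * m = n - 1 by omega] using h
  have hqn : 27 ≤ q ^ n := by
    calc 27 = 3 ^ 3 := by norm_num
      _ ≤ q ^ 3 := Nat.pow_le_pow_left hq3 3
      _ ≤ q ^ n := Nat.pow_le_pow_right (by omega) hn
  have hq2 : 9 ≤ q ^ 2 := by nlinarith
  have hd3 : 2 ∣ (q ^ n - 1) := by
    obtain ⟨c, hc⟩ := hqodd.pow (n := n)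
    omega
  have hT : (q ^ n - 1) / 2 * 2 = q ^ n - 1 := Nat.div_mul_cancel hd3
  have hq21 : 0 < (q ^ 2 - 1) * (q - 1) := by
    apply Nat.mul_pos <;> omega
  have heq2 : S * N * mu = (q ^ n - 1) / 2 * lam := by
    have h1 : (q ^ n - 1) * (q ^ (n - 1) - 1) = S * N * ((q ^ 2 - 1) * (q - 1)) := by
      rw [hS, hN]; ring
    rw [h1, Nat.mul_div_cancel _ hq21] at heq
    exact heq
  have hkey : 2 * N * mu = (q - 1) * lam := by
    have h : (q ^ n - 1) * (2 * N * mu) = (q ^ n - 1) * ((q - 1) * lam) := by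
      calc (q ^ n - 1) * (2 * N * mu) = (q - 1) * S * (2 * N * mu) := by rw [hS]
        _ = S * N * mu * 2 * (q - 1) := by ring
        _ = (q ^ n - 1) / 2 * lam * 2 * (q - 1) := by rw [heq2]
        _ = (q ^ n - 1) / 2 * 2 * ((q - 1) * lam) := by ring
        _ = (q ^ n - 1) * ((q - 1) * lam) := by rw [hT]
    exact Nat.eq_of_mul_eq_mul_left (by omega) h
  have hn3 : n = 3 := by
    by_contra hne3
    have hn5 : 5 ≤ n := by omega
    obtain ⟨t, ht⟩ := hdvd
    -- move to ℤ
    zify [show 1 ≤ q ^ (n-1) from Nat.one_le_pow _ _ (by omega),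
      show 1 ≤ q ^ 2 by omega] at hN
    zify [show 6 ≤ q ^ n by omega] at ht
    zify [show 1 ≤ q by omega] at hkey
    have hpow : (q : ℤ) ^ n = (q : ℤ) ^ (n - 1) * (q : ℤ) := by
      rw [← pow_succ]; congr 1; omega
    have d1 : (N : ℤ) ∣ ((q : ℤ) - 1) * ((q : ℤ) ^ n - 6) :=
      ⟨2 * mu * t, by linear_combination ((q:ℤ) - 1) * ht - (t:ℤ) * hkey⟩
    have d2 : (N : ℤ) ∣ ((q : ℤ) - 1) * ((q : ℤ) ^ n - q) :=
      ⟨((q:ℤ) - 1) * q * ((q:ℤ) ^ 2 - 1), by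
        linear_combination ((q:ℤ) - 1) * hpow + ((q:ℤ) - 1) * (q:ℤ) * hN⟩
    have d3 : (N : ℤ) ∣ ((q : ℤ) - 1) * ((q : ℤ) - 6) := by
      have hsub := dvd_sub d1 d2
      have e : ((q:ℤ) - 1) * ((q:ℤ) ^ n - 6) - ((q:ℤ) - 1) * ((q:ℤ) ^ n - q)
          = ((q:ℤ) - 1) * ((q:ℤ) - 6) := by ring
      rwa [e] at hsub
    have hqZ : (3 : ℤ) ≤ (q : ℤ) := by exact_mod_cast hq3
    have hq6 : (q : ℤ) ≠ 6 := by
      have : q ≠ 6 := by obtain ⟨c, hc⟩ := hqodd; omega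
      exact_mod_cast this
    have hne0 : ((q:ℤ) - 1) * ((q:ℤ) - 6) ≠ 0 :=
      mul_ne_zero (by intro h; linarith [sub_eq_zero.mp h]) (sub_ne_zero.mpr hq6)
    have hle : (N : ℤ) ≤ |((q:ℤ) - 1) * ((q:ℤ) - 6)| :=
      Int.le_of_dvd (abs_pos.mpr hne0) ((dvd_abs _ _).mpr d3)
    have habs : |((q:ℤ) - 1) * ((q:ℤ) - 6)| ≤ (q:ℤ) * (q:ℤ) := by
      rw [abs_mul]
      apply mul_le_mul
      · rw [abs_le]; constructor <;> linarith
      · rw [abs_le]; constructor <;> linarith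
      · exact abs_nonneg _
      · linarith
    have h4 : (q : ℤ) ^ 4 ≤ (q : ℤ) ^ (n - 1) := by
      exact_mod_cast Nat.pow_le_pow_right (by omega) (show 4 ≤ n - 1 by omega)
    have hq2Z : (9 : ℤ) ≤ (q : ℤ) ^ 2 := by nlinarith [hqZ]
    have hNge : (q : ℤ) ^ 2 + 1 ≤ (N : ℤ) := by nlinarith [hN, h4, hq2Z]
    have hqq : (q : ℤ) * (q : ℤ) = (q : ℤ) ^ 2 := by ring
    linarith [hle, habs, hNge]
  refine ⟨hn3, ?_⟩
  have hN1 : N = 1 := by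
    have : q ^ (n - 1) - 1 = q ^ 2 - 1 := by rw [hn3]
    rw [this] at hN
    have h1 : (q ^ 2 - 1) * 1 = (q ^ 2 - 1) * N := by simpa using hN
    exact (Nat.eq_of_mul_eq_mul_left (by omega) h1).symm
  rw [hN1] at hkey
  refine (Nat.div_eq_of_eq_mul_left (by omega) ?_).symm
  rw [mul_comm]; linarith [hkey]
end
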